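/- Let U ⊆ ℝ × ℝ be open, u : ℝ × ℝ → ℝ, and let φ, ω : ℝ × ℝ → ℝ be twice continuously differentiable on U with ω nonvanishing on U, Δφ = u·φ and Δω = u·ω on U. Then the vector field ω²·∇(φ/ω) is divergence free on U: ∂x(ω²·(φ/ω)_x) + ∂y(ω²·(φ/ω)_y) = 0 on U. (This is the compatibility condition guaranteeing local solvability of the Moutard relations for θ.) -/

import Mathlib

/-- Partial derivative of `f` at `p` in direction `v`. -/
noncomputable def pd (v : ℝ × ℝ) (f : ℝ × ℝ → ℝ) (p : ℝ × ℝ) : ℝ :=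
  fderiv ℝ f p v

/-- Laplacian of `f` at `p`. -/
noncomputable def lap (f : ℝ × ℝ → ℝ) (p : ℝ × ℝ) : ℝ :=
  pd (1, 0) (pd (1, 0) f) p + pd (0, 1) (pd (0, 1) f) p

/-!
Writing `g = φ / ω`, the quotient rule gives `ω² ∂g = ω ∂φ - φ ∂ω` in each direction.
Differentiating once more, the mixed terms `∂ω ∂φ` cancel, so the divergence of `ω² ∇g` is
`ω Δφ - φ Δω = ω u φ - φ u ω = 0`.
-/

open Topology

section PartialDerivative

variable {f g : ℝ × ℝ → ℝ} {p : ℝ × ℝ}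

lemma pd_congr_of_eventuallyEq (v : ℝ × ℝ) (h : f =ᶠ[𝓝 p] g) : pd v f p = pd v g p := by
  simp only [pd, h.fderiv_eq]

lemma differentiableAt_pd (v : ℝ × ℝ) (hf : ContDiffAt ℝ 2 f p) :
    DifferentiableAt ℝ (pd v f) p :=
  (ContinuousLinearMap.apply ℝ ℝ v).differentiableAt.comp p
    ((hf.fderiv_right (m := 1) (by norm_num)).differentiableAt one_ne_zero)

lemma pd_mul (v : ℝ × ℝ) (hf : DifferentiableAt ℝ f p) (hg : DifferentiableAt ℝ g p) :
    pd v (fun q => f q * g q) p = f p * pd v g p + g p * pd v f p := by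
  simp [pd, fderiv_fun_mul hf hg]

lemma pd_sub (v : ℝ × ℝ) (hf : DifferentiableAt ℝ f p) (hg : DifferentiableAt ℝ g p) :
    pd v (fun q => f q - g q) p = pd v f p - pd v g p := by
  simp [pd, fderiv_fun_sub hf hg]

lemma sq_mul_pd_div (v : ℝ × ℝ) (hf : DifferentiableAt ℝ f p) (hg : DifferentiableAt ℝ g p)
    (hg0 : g p ≠ 0) :
    g p ^ 2 * pd v (fun q => f q / g q) p = g p * pd v f p - f p * pd v g p := by
  have hquot : DifferentiableAt ℝ (fun q => f q / g q) p := by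
    fun_prop (disch := exact hg0)
  have hf_eq : pd v f p = g p * pd v (fun q => f q / g q) p + f p / g p * pd v g p := by
    rw [← pd_mul v hg hquot]
    refine pd_congr_of_eventuallyEq v ?_
    filter_upwards [hg.continuousAt.eventually_ne hg0] with q hq
    field_simp
  rw [hf_eq]
  field_simp
  ring

lemma pd_mul_pd_sub_mul_pd (v : ℝ × ℝ) (hf : ContDiffAt ℝ 2 f p) (hg : ContDiffAt ℝ 2 g p) :
    pd v (fun q => g q * pd v f q - f q * pd v g q) p
      = g p * pd v (pd v f) p - f p * pd v (pd v g) p := by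
  have hf₁ := hf.differentiableAt two_ne_zero
  have hg₁ := hg.differentiableAt two_ne_zero
  have hf₂ := differentiableAt_pd v hf
  have hg₂ := differentiableAt_pd v hg
  rw [pd_sub v (hg₁.fun_mul hf₂) (hf₁.fun_mul hg₂), pd_mul v hg₁ hf₂, pd_mul v hf₁ hg₂]
  ring

end PartialDerivative

/-- if `Δφ = uφ` and `Δω = uω` with `ω` nonvanishing, then the vector
field `ω² ∇(φ/ω)` is divergence free. -/
theorem moutard_compatibility_divergence_free
    (U : Set (ℝ × ℝ)) (hU : IsOpen U)
    (u φ ω : ℝ × ℝ → ℝ)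
    (hφ : ContDiffOn ℝ 2 φ U)
    (hω : ContDiffOn ℝ 2 ω U)
    (hω0 : ∀ p ∈ U, ω p ≠ 0)
    (hφeq : ∀ p ∈ U, lap φ p = u p * φ p)
    (hωeq : ∀ p ∈ U, lap ω p = u p * ω p) :
    ∀ p ∈ U,
      pd (1, 0) (fun q => (ω q) ^ 2 * pd (1, 0) (fun r => φ r / ω r) q) p
        + pd (0, 1) (fun q => (ω q) ^ 2 * pd (0, 1) (fun r => φ r / ω r) q) p
        = 0 := by
  intro p hp
  have hφ' : ∀ q ∈ U, ContDiffAt ℝ 2 φ q := fun q hq => hφ.contDiffAt (hU.mem_nhds hq)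
  have hω' : ∀ q ∈ U, ContDiffAt ℝ 2 ω q := fun q hq => hω.contDiffAt (hU.mem_nhds hq)
  have hflux : ∀ v : ℝ × ℝ,
      pd v (fun q => ω q ^ 2 * pd v (fun r => φ r / ω r) q) p
        = ω p * pd v (pd v φ) p - φ p * pd v (pd v ω) p := by
    intro v
    rw [← pd_mul_pd_sub_mul_pd v (hφ' p hp) (hω' p hp)]
    refine pd_congr_of_eventuallyEq v ?_
    filter_upwards [hU.mem_nhds hp] with q hq
    exact sq_mul_pd_div v ((hφ' q hq).differentiableAt two_ne_zero)
      ((hω' q hq).differentiableAt two_ne_zero) (hω0 q hq)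
  have hφp := hφeq p hp
  have hωp := hωeq p hp
  rw [lap] at hφp hωp
  rw [hflux, hflux]
  linear_combination ω p * hφp - φ p * hωp
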